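/- arXiv:1801.05048 — 3 statements merged into one kernel-verified Lean document; each statement's English description precedes it below -/
import Mathlib

section
/- Let (Ω, 𝒜, ℙ) be a probability space, E a standard Borel space, Q an atomless probability measure on E, π₁ ∈ [0,1], and let q̃ : Ω → (measures on E) be measurable with q̃(ω) a probability measure for every ω. Assume that for all measurable sets A, B ⊆ E one has ∫_Ω q̃(ω)(A) · q̃(ω)(B) dℙ(ω) = π₁ · Q(A ∩ B) + (1 − π₁) · Q(A) · Q(B). Then ∫_Ω (q̃(ω) ⊗ q̃(ω))(Δ_E) dℙ(ω) = π₁, where Δ_E = {(x,x) : x ∈ E} is the diagonal of E × E (which is measurable since E is standard Borel). In other words, two draws that are conditionally i.i.d. from q̃ coincide with probability exactly π₁. -/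
open MeasureTheory Set
open scoped ENNReal

/-!
The mean measure `B ↦ ∫ (q̃ ⊗ q̃)(B) dℙ` on `E × E` and the mixture
`π₁ · (law of (x, x) under Q) + (1 − π₁) · (Q ⊗ Q)` are finite measures that agree on
measurable rectangles by the moment hypothesis, so they coincide. Evaluated on the diagonal,
the first component of the mixture gives mass `1` and, `Q` being atomless, `Q ⊗ Q` gives `0`.
-/

namespace MeasureTheory.Measure

variable {Ω E : Type*} [MeasurableSpace Ω] [MeasurableSpace E]

lemma prod_diagonal_eq_zero [MeasurableEq E] (μ ν : Measure E) [SFinite ν]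
    [NullSingletonClass ν] : μ.prod ν (diagonal E) = 0 := by
  have hslice : ∀ x : E, Prod.mk x ⁻¹' diagonal E = {x} := fun x => by ext; simp [eq_comm]
  simp [prod_apply measurableSet_diagonal, hslice]

lemma map_diag_apply_prod (μ : Measure E) {A B : Set E} (hA : MeasurableSet A)
    (hB : MeasurableSet B) : μ.map (fun x => (x, x)) (A ×ˢ B) = μ (A ∩ B) := by
  rw [map_apply (f := fun x : E => (x, x)) (by fun_prop) (hA.prod hB)]
  rfl

lemma map_diag_apply_diagonal [MeasurableEq E] (μ : Measure E) :
    μ.map (fun x => (x, x)) (diagonal E) = μ univ := by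
  rw [map_apply (f := fun x : E => (x, x)) (by fun_prop) measurableSet_diagonal]
  congr
  ext
  simp

lemma _root_.Measurable.prod_measure {q r : Ω → Measure E} (hq : Measurable q)
    (hr : Measurable r) [∀ ω, IsProbabilityMeasure (q ω)] [∀ ω, IsProbabilityMeasure (r ω)] :
    Measurable fun ω => (q ω).prod (r ω) := by
  let κ : ProbabilityTheory.Kernel Ω E := ⟨q, hq⟩
  let η : ProbabilityTheory.Kernel Ω E := ⟨r, hr⟩
  have : ProbabilityTheory.IsMarkovKernel κ := ⟨‹_›⟩
  have : ProbabilityTheory.IsMarkovKernel η := ⟨‹_›⟩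
  exact funext (ProbabilityTheory.Kernel.prod_apply κ η) ▸ (κ.prod η).measurable

theorem bind_prod_self_eq_of_moments (ℙ : Measure Ω) [IsFiniteMeasure ℙ] (Q : Measure E)
    [SFinite Q] (π₁ : ℝ≥0∞) {q : Ω → Measure E} (hq : Measurable q)
    [∀ ω, IsProbabilityMeasure (q ω)]
    (hmom : ∀ A B : Set E, MeasurableSet A → MeasurableSet B →
      ∫⁻ ω, q ω A * q ω B ∂ℙ = π₁ * Q (A ∩ B) + (1 - π₁) * (Q A * Q B)) :
    ℙ.bind (fun ω => (q ω).prod (q ω)) =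
      π₁ • Q.map (fun x => (x, x)) + (1 - π₁) • Q.prod Q := by
  have hqq := (hq.prod_measure hq).aemeasurable (μ := ℙ)
  have : IsFiniteMeasure (ℙ.bind fun ω => (q ω).prod (q ω)) :=
    ⟨by simp [bind_apply .univ hqq]⟩
  refine ext_prod fun hA hB => ?_
  simp [bind_apply (hA.prod hB) hqq, hmom _ _ hA hB, map_diag_apply_prod Q hA hB]

end MeasureTheory.Measure

theorem prob_diagonal_eq_pi_one_general
    {Ω : Type*} [MeasurableSpace Ω] (ℙ : Measure Ω) [IsProbabilityMeasure ℙ]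
    {E : Type*} [MeasurableSpace E] [StandardBorelSpace E]
    (Q : Measure E) [IsProbabilityMeasure Q] [NullSingletonClass Q]
    (π₁ : ℝ≥0∞)
    (q : Ω → Measure E) (hq : Measurable q)
    (hqprob : ∀ ω, IsProbabilityMeasure (q ω))
    (hmom : ∀ A B : Set E, MeasurableSet A → MeasurableSet B →
      ∫⁻ ω, q ω A * q ω B ∂ℙ = π₁ * Q (A ∩ B) + (1 - π₁) * (Q A * Q B)) :
    ∫⁻ ω, (q ω).prod (q ω) {p : E × E | p.1 = p.2} ∂ℙ = π₁ := by
  have : ∀ ω, IsProbabilityMeasure (q ω) := hqprob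
  change ∫⁻ ω, (q ω).prod (q ω) (diagonal E) ∂ℙ = π₁
  rw [← Measure.bind_apply measurableSet_diagonal (hq.prod_measure hq).aemeasurable,
    Measure.bind_prod_self_eq_of_moments ℙ Q π₁ hq hmom]
  simp [Measure.map_diag_apply_diagonal, Measure.prod_diagonal_eq_zero]

/-- Proposition 1 (abstract form): if a random probability measure `q̃` on a standard
Borel space with atomless "mean-square" structure satisfies
`E[q̃(A) q̃(B)] = π₁ Q(A ∩ B) + (1 − π₁) Q(A) Q(B)` for all measurable `A, B`,
then two conditionally i.i.d. draws from `q̃` coincide with probability `π₁`: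
`E[(q̃ ⊗ q̃)(Δ)] = π₁` for the diagonal `Δ`. -/
theorem prob_diagonal_eq_pi_one
    {Ω : Type*} [MeasurableSpace Ω] (ℙ : Measure Ω) [IsProbabilityMeasure ℙ]
    {E : Type*} [MeasurableSpace E] [StandardBorelSpace E]
    (Q : Measure E) [IsProbabilityMeasure Q] [NullSingletonClass Q]
    (π₁ : ℝ≥0∞) (hπ : π₁ ≤ 1)
    (q : Ω → Measure E) (hq : Measurable q)
    (hqprob : ∀ ω, IsProbabilityMeasure (q ω))
    (hmom : ∀ A B : Set E, MeasurableSet A → MeasurableSet B →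
      ∫⁻ ω, q ω A * q ω B ∂ℙ = π₁ * Q (A ∩ B) + (1 - π₁) * (Q A * Q B)) :
    ∫⁻ ω, (q ω).prod (q ω) {p : E × E | p.1 = p.2} ∂ℙ = π₁ :=
  prob_diagonal_eq_pi_one_general ℙ Q π₁ q hq hqprob hmom
end

section
/- Let (Ω, 𝒜, ℙ) be a probability space and X a measurable space in which all singletons are measurable. Let θ_j : Ω → X (j ∈ ℕ) be measurable maps such that the distribution of each θ_j is an atomless measure on X, and let ω_j : Ω → [0, ∞) (j ∈ ℕ) be measurable with Σ_{j∈ℕ} ω_j(o) = 1 for ℙ-almost every o ∈ Ω. Then for every fixed measure p on X, the set {o ∈ Ω : Σ_{j∈ℕ} ω_j(o) · δ_{θ_j(o)} = p} is a ℙ-null set (i.e., it is contained in a measurable set of ℙ-measure zero). -/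
open MeasureTheory Set
open scoped ENNReal NNReal

/-!
Every realisation of `Σ_j ω_j δ_{θ_j}` is s-finite, so it can only equal `p` if `p` is s-finite,
and then `p` has countably many atoms. When the weights sum to one, some `ω_j` is positive and
`θ_j` is an atom of `p`. Since each `θ_j` has an atomless law, it hits the countable set of atoms
of `p` with probability zero.
-/

namespace MeasureTheory.Measure

variable {α : Type*} [MeasurableSpace α]

theorem countable_setOf_measure_singleton_pos [MeasurableSingletonClass α] (μ : Measure α)
    [SFinite μ] : {x : α | 0 < μ {x}}.Countable :=
  countable_meas_level_set_pos measurable_id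

theorem measure_preimage_eq_zero_of_countable [MeasurableSingletonClass α] {Ω : Type*}
    [MeasurableSpace Ω] {μ : Measure Ω} {f : Ω → α} (hf : Measurable f)
    (hatomless : ∀ x, μ.map f {x} = 0) {A : Set α} (hA : A.Countable) : μ (f ⁻¹' A) = 0 := by
  rw [← map_apply hf hA.measurableSet]
  exact (measure_null_iff_singleton hA).2 fun x _ => hatomless x

theorem le_sum_smul_dirac_apply_singleton {ι : Type*} (c : ι → ℝ≥0∞) (x : ι → α) (j : ι) :
    c j ≤ sum (fun i => c i • dirac (x i)) {x j} :=
  calc c j = (c j • dirac (x j)) {x j} := by simp [dirac_apply_of_mem]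
    _ ≤ _ := le_iff'.1 (le_sum (fun i => c i • dirac (x i)) j) _

end MeasureTheory.Measure

open MeasureTheory.Measure in
theorem random_discrete_measure_ne_fixed_general
    {Ω : Type*} [MeasurableSpace Ω] (ℙ : Measure Ω)
    {X : Type*} [MeasurableSpace X] [MeasurableSingletonClass X]
    (θ : ℕ → Ω → X) (hθ : ∀ j, Measurable (θ j))
    (hatomless : ∀ j, ∀ x : X, ℙ.map (θ j) {x} = 0)
    (w : ℕ → Ω → ℝ≥0)
    (hsum : ∀ᵐ o ∂ℙ, ∑' j, w j o = 1)
    (p : Measure X) :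
    ℙ {o : Ω | Measure.sum (fun j => (w j o : ℝ≥0∞) • Measure.dirac (θ j o)) = p}
      = 0 := by
  rw [measure_eq_zero_iff_ae_notMem]
  by_cases hp : SFinite p
  swap
  · exact ae_of_all _ fun o (ho : _ = p) => hp (ho ▸ inferInstance)
  have hmiss : ∀ᵐ o ∂ℙ, ∀ j, θ j o ∉ {x | 0 < p {x}} := ae_all_iff.2 fun j =>
    measure_eq_zero_iff_ae_notMem.1 <| measure_preimage_eq_zero_of_countable (hθ j)
      (hatomless j) (countable_setOf_measure_singleton_pos p)
  filter_upwards [hsum, hmiss] with o hone hmiss_o (hS : _ = p)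
  obtain ⟨j, hj⟩ : ∃ j, w j o ≠ 0 := by
    by_contra! h
    simp [h] at hone
  refine hmiss_o j ?_
  calc 0 < (w j o : ℝ≥0∞) := by positivity
    _ ≤ p {θ j o} := hS ▸ le_sum_smul_dirac_apply_singleton _ _ j

/-- Key lemma in the proof of Proposition 1: a random discrete probability measure
`Σ_j ω_j δ_{θ_j}` whose atom locations `θ_j` have atomless laws equals any fixed
measure `p` with probability zero. -/
theorem random_discrete_measure_ne_fixed
    {Ω : Type*} [MeasurableSpace Ω] (ℙ : Measure Ω) [IsProbabilityMeasure ℙ]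
    {X : Type*} [MeasurableSpace X] [MeasurableSingletonClass X]
    (θ : ℕ → Ω → X) (hθ : ∀ j, Measurable (θ j))
    (hatomless : ∀ j, ∀ x : X, ℙ.map (θ j) {x} = 0)
    (w : ℕ → Ω → ℝ≥0) (hw : ∀ j, Measurable (w j))
    (hsum : ∀ᵐ o ∂ℙ, ∑' j, w j o = 1)
    (p : Measure X) :
    ℙ {o : Ω | Measure.sum (fun j => (w j o : ℝ≥0∞) • Measure.dirac (θ j o)) = p}
      = 0 :=
  random_discrete_measure_ne_fixed_general ℙ θ hθ hatomless w hsum p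
end

section
/- Let σ₀ ∈ (0, 1), γ ≥ 0, h₁ > 0, h₂ > 0 and k > 0 be real numbers. Then ∫₀^∞ ∫₀^∞ u^{h₁−1} v^{h₂−1} (u+v)^{kσ₀ − h₁ − h₂} exp(−γ(u+v)^{σ₀} − u^{σ₀} − v^{σ₀}) du dv = (Γ(k)/σ₀) ∫₀^1 w^{h₁−1} (1−w)^{h₂−1} [γ + w^{σ₀} + (1−w)^{σ₀}]^{−k} dw, where Γ denotes the Gamma function. -/
/-!
Substitute `u = v w / (1 - w)` in the inner integral, so that `u + v = v / (1 - w)`. The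
integrand becomes `w^{h₁-1} (1-w)^{h₂-1}` times `(1-w)⁻¹ g(v / (1-w))`, where
`g(s) = s^{kσ₀-1} exp(-D(w) s^{σ₀})` and `D(w) = γ + w^{σ₀} + (1-w)^{σ₀}`. After exchanging the
order of integration, each `v`-integral is a Gamma integral, equal to `Γ(k)/σ₀ · D(w)^{-k}`.
The exchange is justified because `σ₀ ≤ 1` gives `D ≥ 1`, so the resulting `w`-integrand is
dominated by a Beta integrand.
-/

open MeasureTheory Set Real

theorem integrableOn_rpow_mul_one_sub_rpow {a b : ℝ} (ha : 0 < a) (hb : 0 < b) :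
    IntegrableOn (fun x : ℝ => x ^ (a - 1) * (1 - x) ^ (b - 1)) (Ioo 0 1) := by
  have h := Complex.betaIntegral_convergent (u := a) (v := b) (by simpa) (by simpa)
  rw [intervalIntegrable_iff_integrableOn_Ioo_of_le zero_le_one] at h
  refine IntegrableOn.congr_fun h.norm (fun x hx => ?_) measurableSet_Ioo
  have h1x : (1 : ℂ) - x = ((1 - x : ℝ) : ℂ) := by push_cast; ring
  rw [norm_mul, h1x, Complex.norm_cpow_eq_rpow_re_of_pos hx.1,
    Complex.norm_cpow_eq_rpow_re_of_pos (sub_pos.2 hx.2)]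
  simp

theorem one_le_rpow_add_one_sub_rpow {σ w : ℝ} (hσ : σ ≤ 1) (hw₀ : 0 ≤ w) (hw₁ : w ≤ 1) :
    1 ≤ w ^ σ + (1 - w) ^ σ := by
  linarith [self_le_rpow_of_le_one hw₀ hw₁ hσ,
    self_le_rpow_of_le_one (sub_nonneg.2 hw₁) (by linarith) hσ]

theorem integrableOn_rpow_mul_one_sub_rpow_mul_rpow_neg {σ γ a b k : ℝ} (hσ : σ ≤ 1)
    (hγ : 0 ≤ γ) (ha : 0 < a) (hb : 0 < b) (hk : 0 ≤ k) :
    IntegrableOn (fun w => w ^ (a - 1) * (1 - w) ^ (b - 1) * (γ + w ^ σ + (1 - w) ^ σ) ^ (-k))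
      (Ioo 0 1) := by
  refine (integrableOn_rpow_mul_one_sub_rpow ha hb).mono'
    (Measurable.aestronglyMeasurable (by fun_prop)) ?_
  filter_upwards [ae_restrict_mem measurableSet_Ioo] with w ⟨hw₀, hw₁⟩
  have hbase : 1 ≤ γ + w ^ σ + (1 - w) ^ σ := by
    linarith [one_le_rpow_add_one_sub_rpow hσ hw₀.le hw₁.le]
  have hbeta : 0 ≤ w ^ (a - 1) * (1 - w) ^ (b - 1) := by
    have : 0 < 1 - w := sub_pos.2 hw₁
    positivity
  rw [norm_of_nonneg (by positivity)]
  exact mul_le_of_le_one_right hbeta (rpow_le_one_of_one_le_of_nonpos hbase (neg_nonpos.2 hk))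

theorem integral_integral_swap_of_nonneg {α β : Type*} [MeasurableSpace α] [MeasurableSpace β]
    {μ : Measure α} {ν : Measure β} [SFinite μ] [SFinite ν] {f : α → β → ℝ} {g : β → ℝ}
    (hf : AEStronglyMeasurable (Function.uncurry f) (μ.prod ν))
    (hf_nonneg : ∀ᵐ y ∂ν, ∀ᵐ x ∂μ, 0 ≤ f x y)
    (hf_int : ∀ᵐ y ∂ν, Integrable (f · y) μ)
    (hg : ∀ᵐ y ∂ν, ∫ x, f x y ∂μ = g y) (hg_int : Integrable g ν) :
    ∫ x, ∫ y, f x y ∂ν ∂μ = ∫ y, g y ∂ν := by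
  have hnorm : ∀ᵐ y ∂ν, ∫ x, ‖f x y‖ ∂μ = g y := by
    filter_upwards [hf_nonneg, hg] with y hy hgy
    rw [← hgy]
    exact integral_congr_ae (hy.mono fun x hx => Real.norm_of_nonneg hx)
  have hprod : Integrable (Function.uncurry f) (μ.prod ν) :=
    (integrable_prod_iff' hf).2 ⟨hf_int, hg_int.congr (hnorm.mono fun _ h => h.symm)⟩
  rw [integral_integral_swap hprod]
  exact integral_congr_ae hg

section MulDivOneSub

variable {c : ℝ}

theorem hasDerivAt_mul_div_one_sub {w : ℝ} (hw : w ≠ 1) :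
    HasDerivAt (fun w => c * w / (1 - w)) (c / (1 - w) ^ 2) w := by
  have h1w : 1 - w ≠ 0 := sub_ne_zero.2 hw.symm
  refine (((hasDerivAt_id' w).const_mul c).fun_div
    ((hasDerivAt_id' w).const_sub 1) h1w).congr_deriv ?_
  congr 1
  ring

theorem injOn_mul_div_one_sub (hc : c ≠ 0) : InjOn (fun w => c * w / (1 - w)) (Ioo 0 1) := by
  intro x hx y hy hxy
  have hx1 : 1 - x ≠ 0 := by linarith [hx.2]
  have hy1 : 1 - y ≠ 0 := by linarith [hy.2]
  rw [div_eq_div_iff hx1 hy1] at hxy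
  have : c * (x - y) = 0 := by linarith
  simpa [hc, sub_eq_zero] using this

theorem image_mul_div_one_sub_Ioo (hc : 0 < c) :
    (fun w => c * w / (1 - w)) '' Ioo 0 1 = Ioi 0 := by
  ext u
  refine ⟨?_, fun hu => ⟨u / (u + c), ?_, ?_⟩⟩
  · rintro ⟨w, hw, rfl⟩
    exact div_pos (mul_pos hc hw.1) (sub_pos.2 hw.2)
  · have hu : (0 : ℝ) < u := hu
    exact ⟨by positivity, (div_lt_one (by positivity)).2 (by linarith)⟩
  · have hu : (0 : ℝ) < u := hu
    have : u + c ≠ 0 := by positivity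
    field_simp
    simp [hc.ne']

theorem integral_Ioi_eq_integral_Ioo_mul_div_one_sub {E : Type*} [NormedAddCommGroup E]
    [NormedSpace ℝ E] (f : ℝ → E) (hc : 0 < c) :
    ∫ u in Ioi 0, f u = ∫ w in Ioo 0 1, (c / (1 - w) ^ 2) • f (c * w / (1 - w)) := by
  rw [← image_mul_div_one_sub_Ioo hc, integral_image_eq_integral_abs_deriv_smul measurableSet_Ioo
    (fun w hw => (hasDerivAt_mul_div_one_sub hw.2.ne).hasDerivWithinAt)
    (injOn_mul_div_one_sub hc.ne')]
  refine setIntegral_congr_fun measurableSet_Ioo fun w _ => ?_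
  rw [abs_of_nonneg (by positivity)]

end MulDivOneSub

section GammaIntegral

variable {σ k b c : ℝ}

theorem integral_Ioi_rpow_mul_exp_neg_mul_rpow_eq_Gamma (hσ : 0 < σ) (hk : 0 < k) (hb : 0 < b) :
    ∫ s in Ioi 0, s ^ (k * σ - 1) * exp (-(b * s ^ σ)) = Gamma k / σ * b ^ (-k) := by
  have h := integral_rpow_mul_exp_neg_mul_rpow hσ (by nlinarith : -1 < k * σ - 1) hb
  simp only [sub_add_cancel, neg_mul] at h
  rw [h, mul_div_cancel_right₀ _ hσ.ne', neg_div, mul_div_cancel_right₀ _ hσ.ne']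
  ring

theorem integral_Ioi_inv_mul_rpow_div_mul_exp (hσ : 0 < σ) (hk : 0 < k) (hb : 0 < b)
    (hc : 0 < c) :
    ∫ v in Ioi 0, c⁻¹ * ((v / c) ^ (k * σ - 1) * exp (-(b * (v / c) ^ σ)))
      = Gamma k / σ * b ^ (-k) := by
  simp_rw [integral_const_mul, div_eq_mul_inv _ c]
  rw [integral_comp_mul_right_Ioi (fun s => s ^ (k * σ - 1) * exp (-(b * s ^ σ))) 0
    (inv_pos.2 hc), zero_mul, inv_inv, smul_eq_mul, inv_mul_cancel_left₀ hc.ne',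
    integral_Ioi_rpow_mul_exp_neg_mul_rpow_eq_Gamma hσ hk hb]

theorem integrableOn_Ioi_inv_mul_rpow_div_mul_exp (hσ : 0 < σ) (hk : 0 < k) (hb : 0 < b)
    (hc : 0 < c) :
    IntegrableOn (fun v => c⁻¹ * ((v / c) ^ (k * σ - 1) * exp (-(b * (v / c) ^ σ)))) (Ioi 0) :=
  Integrable.of_integral_ne_zero (by
    rw [integral_Ioi_inv_mul_rpow_div_mul_exp hσ hk hb hc]
    positivity)

end GammaIntegral

theorem stable_integrand_comp_mul_div_one_sub {σ γ h₁ h₂ k v w : ℝ} (hv : 0 < v)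
    (hw : w ∈ Ioo (0 : ℝ) 1) :
    v / (1 - w) ^ 2 * ((v * w / (1 - w)) ^ (h₁ - 1) * v ^ (h₂ - 1) *
        (v * w / (1 - w) + v) ^ (k * σ - h₁ - h₂) *
        exp (-(γ * (v * w / (1 - w) + v) ^ σ) - (v * w / (1 - w)) ^ σ - v ^ σ))
      = w ^ (h₁ - 1) * (1 - w) ^ (h₂ - 1) * ((1 - w)⁻¹ * ((v / (1 - w)) ^ (k * σ - 1) *
        exp (-((γ + w ^ σ + (1 - w) ^ σ) * (v / (1 - w)) ^ σ)))) := by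
  obtain ⟨hw₀, hw₁⟩ := hw
  have hc₀ : 0 < 1 - w := sub_pos.2 hw₁
  obtain ⟨s, hs, rfl⟩ : ∃ s, 0 < s ∧ v = s * (1 - w) :=
    ⟨v / (1 - w), by positivity, by field_simp⟩
  have hu : s * (1 - w) * w / (1 - w) = s * w := by field_simp
  have hsum : s * w + s * (1 - w) = s := by ring
  have hpow : s ^ (k * σ - 1) = s * (s ^ (h₁ - 1) * s ^ (h₂ - 1) * s ^ (k * σ - h₁ - h₂)) := by
    rw [← rpow_add hs, ← rpow_add hs, mul_comm s, ← rpow_add_one hs.ne']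
    congr 1
    ring
  rw [hu, hsum, mul_div_cancel_right₀ _ hc₀.ne', hpow]
  simp only [mul_rpow hs.le hw₀.le, mul_rpow hs.le hc₀.le]
  rw [show -(γ * s ^ σ) - s ^ σ * w ^ σ - s ^ σ * (1 - w) ^ σ
    = -((γ + w ^ σ + (1 - w) ^ σ) * s ^ σ) by ring]
  field_simp

/-- The double Laplace-type integral of the heterogeneous component `I₂` of the
latent nested σ-stable pEPPF reduces to `(Γ(k)/σ₀) · J_{σ₀,γ}(h₁,h₂;k)`:
`∫₀^∞ ∫₀^∞ u^{h₁−1} v^{h₂−1} (u+v)^{kσ₀−h₁−h₂} e^{−γ(u+v)^{σ₀} − u^{σ₀} − v^{σ₀}} du dv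
  = (Γ(k)/σ₀) ∫₀^1 w^{h₁−1} (1−w)^{h₂−1} [γ + w^{σ₀} + (1−w)^{σ₀}]^{−k} dw`. -/
theorem latent_stable_double_integral (σ₀ γ h₁ h₂ k : ℝ)
    (hσ₀ : σ₀ ∈ Set.Ioo (0 : ℝ) 1) (hγ : 0 ≤ γ)
    (hh₁ : 0 < h₁) (hh₂ : 0 < h₂) (hk : 0 < k) :
    ∫ v in Ioi (0 : ℝ), ∫ u in Ioi (0 : ℝ),
        u ^ (h₁ - 1) * v ^ (h₂ - 1) * (u + v) ^ (k * σ₀ - h₁ - h₂) *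
          Real.exp (-(γ * (u + v) ^ σ₀) - u ^ σ₀ - v ^ σ₀)
      = (Real.Gamma k / σ₀) *
          ∫ w in Ioo (0 : ℝ) 1,
            w ^ (h₁ - 1) * (1 - w) ^ (h₂ - 1) *
              (γ + w ^ σ₀ + (1 - w) ^ σ₀) ^ (-k) := by
  obtain ⟨hσ, hσ₁⟩ := hσ₀
  rw [← integral_const_mul]
  calc _ = ∫ v in Ioi 0, ∫ w in Ioo 0 1, w ^ (h₁ - 1) * (1 - w) ^ (h₂ - 1) *
        ((1 - w)⁻¹ * ((v / (1 - w)) ^ (k * σ₀ - 1) *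
          exp (-((γ + w ^ σ₀ + (1 - w) ^ σ₀) * (v / (1 - w)) ^ σ₀)))) := by
        refine setIntegral_congr_fun measurableSet_Ioi fun v hv => ?_
        rw [integral_Ioi_eq_integral_Ioo_mul_div_one_sub _ hv]
        exact setIntegral_congr_fun measurableSet_Ioo fun w hw =>
          stable_integrand_comp_mul_div_one_sub hv hw
    _ = _ := by
      refine integral_integral_swap_of_nonneg
        (Measurable.aestronglyMeasurable (by fun_prop)) ?_ ?_ ?_
        ((integrableOn_rpow_mul_one_sub_rpow_mul_rpow_neg hσ₁.le hγ hh₁ hh₂ hk.le).const_mul _)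
      all_goals
        refine ae_restrict_of_forall_mem measurableSet_Ioo fun w ⟨hw₀, hw₁⟩ => ?_
        have hc : 0 < 1 - w := sub_pos.2 hw₁
        have hD : 0 < γ + w ^ σ₀ + (1 - w) ^ σ₀ := by
          linarith [one_le_rpow_add_one_sub_rpow hσ₁.le hw₀.le hw₁.le]
      · -- `positivity` only uses `hc` once `1 - w` is an atom
        generalize 1 - w = c at hc ⊢
        exact ae_restrict_of_forall_mem measurableSet_Ioi fun v (hv : 0 < v) => by positivity
      · exact (integrableOn_Ioi_inv_mul_rpow_div_mul_exp hσ hk hD hc).const_mul _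
      · rw [integral_const_mul, integral_Ioi_inv_mul_rpow_div_mul_exp hσ hk hD hc]
        ring
end
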